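/- arXiv:math/0611882 — 2 statements merged into one kernel-verified Lean document; each statement's English description precedes it below -/
import Mathlib

section
/- Suppose probability measures m_n on ℝ₊ with finite means converge weakly to a probability measure m ≠ δ₀ with finite mean, and the means ∫x dm_n converge to ∫x dm. Then the size-biased pickings m̄_n(dy) = (y/∫x dm_n) m_n(dy) converge weakly to m̄(dy) = (y/∫x dm) m(dy). -/
open MeasureTheory
open scoped ENNReal

/-- Size-biased picking of a measure `m` on `ℝ₊` with mean `c`:
`m̄(dy) = (y/c) m(dy)`. -/
noncomputable def sizeBiased (m : Measure ℝ) (c : ℝ) : Measure ℝ :=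
  m.withDensity (fun y => ENNReal.ofReal (y / c))

/-!
Against the density `y / c` the integral of `f` becomes `c⁻¹ ∫ f(y) y dm(y)`, so it suffices to
show `∫ f(y) y dmₙ → ∫ f(y) y dm` for bounded continuous `f`. Replacing `y` by its truncation
`min y R` gives bounded continuous integrands, for which weak convergence applies; the error is
at most `‖f‖ (∫ y dmₙ - ∫ min y R dmₙ)`, which converges to the corresponding error for `m`
because both the means and the truncated means converge, and that error vanishes as `R → ∞`.
-/

open Filter Topology

lemma ae_nonneg_of_measure_neg_eq_zero {μ : Measure ℝ} (h : μ {x | x < 0} = 0) :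
    ∀ᵐ x ∂μ, 0 ≤ x := by
  rw [ae_iff]; simpa only [not_le] using h

lemma integral_sizeBiased {μ : Measure ℝ} (hμ : ∀ᵐ x ∂μ, 0 ≤ x) {c : ℝ} (hc : 0 < c)
    (f : ℝ → ℝ) : ∫ x, f x ∂(sizeBiased μ c) = c⁻¹ * ∫ x, f x * x ∂μ := by
  rw [sizeBiased, integral_withDensity_eq_integral_toReal_smul (by fun_prop)
    (.of_forall fun _ => ENNReal.ofReal_lt_top), ← integral_const_mul]
  refine integral_congr_ae ?_
  filter_upwards [hμ] with x hx
  rw [ENNReal.toReal_ofReal (div_nonneg hx hc.le), smul_eq_mul]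
  ring

lemma integral_id_pos_of_ne_dirac_zero {μ : Measure ℝ} [IsProbabilityMeasure μ]
    (hμ : ∀ᵐ x ∂μ, 0 ≤ x) (hint : Integrable (fun x => x) μ) (hne : μ ≠ Measure.dirac 0) :
    0 < ∫ x, x ∂μ := by
  refine (integral_nonneg_of_ae hμ).lt_of_ne fun h => hne ?_
  have hzero : (fun x : ℝ => x) =ᵐ[μ] fun _ => 0 :=
    (integral_eq_zero_iff_of_nonneg_ae hμ hint).mp h.symm
  rw [← Measure.map_id' (μ := μ), Measure.map_congr hzero]
  simp

lemma tendsto_of_forall_approx {ι κ : Type*} {l : Filter ι} {L : Filter κ} [L.NeBot]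
    {a : ι → ℝ} {A : ℝ} {b e : κ → ι → ℝ} {B E : κ → ℝ}
    (hb : ∀ R, Tendsto (b R) l (𝓝 (B R))) (he : ∀ R, Tendsto (e R) l (𝓝 (E R)))
    (hE : Tendsto E L (𝓝 0))
    (hab : ∀ R n, |a n - b R n| ≤ e R n) (hAB : ∀ R, |A - B R| ≤ E R) :
    Tendsto a l (𝓝 A) := by
  rw [Metric.tendsto_nhds]
  intro ε hε
  obtain ⟨R, hR⟩ := (hE.eventually_lt_const (show (0 : ℝ) < ε / 4 by positivity)).exists
  filter_upwards [(he R).eventually_lt_const (show E R < ε / 2 by linarith),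
    Metric.tendsto_nhds.mp (hb R) (ε / 4) (by positivity)] with n hen hbn
  rw [Real.dist_eq] at hbn ⊢
  calc |a n - A| ≤ |a n - b R n| + |b R n - B R| + |A - B R| := by
        have := abs_sub_le (a n) (b R n) (B R)
        have := abs_sub_comm A (B R)
        have := abs_sub_le (a n) (B R) A
        linarith
    _ < ε := by linarith [hab R n, hAB R]

noncomputable def truncNonneg (R : ℝ) : BoundedContinuousFunction ℝ ℝ :=
  .ofNormedAddCommGroup (fun x => min (max x 0) R) (by fun_prop) |R| fun x => by
    rw [Real.norm_eq_abs, abs_le]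
    exact ⟨le_min (by linarith [le_max_right x 0, abs_nonneg R]) (neg_abs_le R),
      (min_le_right _ _).trans (le_abs_self R)⟩

@[simp]
lemma truncNonneg_apply (R x : ℝ) : truncNonneg R x = min (max x 0) R := rfl

lemma truncNonneg_nonneg {R x : ℝ} (hR : 0 ≤ R) : 0 ≤ truncNonneg R x :=
  le_min (le_max_right x 0) hR

lemma truncNonneg_le_self {R x : ℝ} (hx : 0 ≤ x) : truncNonneg R x ≤ x := by
  simp [max_eq_left hx]

lemma truncNonneg_eq_self {R x : ℝ} (hx : 0 ≤ x) (hxR : x ≤ R) : truncNonneg R x = x := by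
  simp [max_eq_left hx, hxR]

lemma tendsto_integral_truncNonneg {μ : Measure ℝ} (hμ : ∀ᵐ x ∂μ, 0 ≤ x)
    (hint : Integrable (fun x => x) μ) :
    Tendsto (fun N : ℕ => ∫ x, truncNonneg N x ∂μ) atTop (𝓝 (∫ x, x ∂μ)) := by
  refine tendsto_integral_of_dominated_convergence (fun x => x)
    (fun N => (truncNonneg N).continuous.aestronglyMeasurable) hint (fun N => ?_) ?_
  · filter_upwards [hμ] with x hx
    rw [Real.norm_of_nonneg (truncNonneg_nonneg N.cast_nonneg)]
    exact truncNonneg_le_self hx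
  · filter_upwards [hμ] with x hx
    refine tendsto_nhds_of_eventually_eq ?_
    filter_upwards [eventually_ge_atTop ⌈x⌉₊] with N hN
    exact truncNonneg_eq_self hx (Nat.ceil_le.mp hN)

lemma abs_integral_mul_id_sub_le {μ : Measure ℝ} [IsFiniteMeasure μ] (hμ : ∀ᵐ x ∂μ, 0 ≤ x)
    (hint : Integrable (fun x => x) μ) (f : BoundedContinuousFunction ℝ ℝ) (R : ℝ) :
    |∫ x, f x * x ∂μ - ∫ x, (truncNonneg R * f) x ∂μ|
      ≤ ‖f‖ * (∫ x, x ∂μ - ∫ x, truncNonneg R x ∂μ) := by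
  have hfx : Integrable (fun x => f x * x) μ :=
    hint.bdd_mul f.continuous.aestronglyMeasurable (.of_forall f.norm_coe_le_norm)
  have htf := (truncNonneg R * f).integrable μ
  have ht := (truncNonneg R).integrable μ
  rw [← integral_sub hfx htf, ← integral_sub hint ht, ← integral_const_mul, ← Real.norm_eq_abs]
  refine norm_integral_le_of_norm_le ((hint.sub ht).const_mul _) ?_
  filter_upwards [hμ] with x hx
  have hsub : 0 ≤ x - truncNonneg R x := sub_nonneg.2 (truncNonneg_le_self hx)
  calc ‖f x * x - (truncNonneg R * f) x‖ = |f x| * (x - truncNonneg R x) := by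
        rw [BoundedContinuousFunction.coe_mul, Pi.mul_apply, ← mul_comm (f x), ← mul_sub,
          Real.norm_eq_abs, abs_mul, abs_of_nonneg hsub]
    _ ≤ ‖f‖ * (x - truncNonneg R x) := by
        gcongr; exact (Real.norm_eq_abs _).symm.le.trans (f.norm_coe_le_norm x)

lemma tendsto_integral_mul_id {ι : Type*} {l : Filter ι} {μs : ι → Measure ℝ} {μ : Measure ℝ}
    [∀ i, IsFiniteMeasure (μs i)] [IsFiniteMeasure μ]
    (hμs : ∀ i, ∀ᵐ x ∂μs i, 0 ≤ x) (hμ : ∀ᵐ x ∂μ, 0 ≤ x)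
    (hints : ∀ i, Integrable (fun x => x) (μs i)) (hint : Integrable (fun x => x) μ)
    (hweak : ∀ f : BoundedContinuousFunction ℝ ℝ,
      Tendsto (fun i => ∫ x, f x ∂μs i) l (𝓝 (∫ x, f x ∂μ)))
    (hmean : Tendsto (fun i => ∫ x, x ∂μs i) l (𝓝 (∫ x, x ∂μ)))
    (f : BoundedContinuousFunction ℝ ℝ) :
    Tendsto (fun i => ∫ x, f x * x ∂μs i) l (𝓝 (∫ x, f x * x ∂μ)) := by
  refine tendsto_of_forall_approx (L := atTop) (fun N : ℕ => hweak (truncNonneg N * f))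
    (fun N => (hmean.sub (hweak (truncNonneg N))).const_mul ‖f‖) ?_
    (fun N i => abs_integral_mul_id_sub_le (hμs i) (hints i) f N)
    (fun N => abs_sub_comm (∫ x, f x * x ∂μ) _ ▸ abs_integral_mul_id_sub_le hμ hint f N)
  simpa using ((tendsto_const_nhds (x := ∫ x, x ∂μ)).sub
    (tendsto_integral_truncNonneg hμ hint)).const_mul ‖f‖

/-- If probability measures `mₙ` on `ℝ₊` with finite means converge weakly to a
probability measure `m ≠ δ₀` with finite mean, and the means converge, then the
size-biased pickings `m̄ₙ` converge weakly to `m̄`. -/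
theorem stmt_2 (mseq : ℕ → Measure ℝ) (m : Measure ℝ)
    (hprobn : ∀ n, IsProbabilityMeasure (mseq n)) (hprob : IsProbabilityMeasure m)
    (hposn : ∀ n, mseq n {x | x < 0} = 0) (hpos : m {x | x < 0} = 0)
    (hintn : ∀ n, Integrable (fun x => x) (mseq n)) (hint : Integrable (fun x => x) m)
    (hne : m ≠ Measure.dirac 0)
    (hweak : ∀ f : BoundedContinuousFunction ℝ ℝ,
      Filter.Tendsto (fun n => ∫ x, f x ∂(mseq n)) Filter.atTop (nhds (∫ x, f x ∂m)))
    (hmean : Filter.Tendsto (fun n => ∫ x, x ∂(mseq n)) Filter.atTop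
      (nhds (∫ x, x ∂m))) :
    ∀ f : BoundedContinuousFunction ℝ ℝ,
      Filter.Tendsto
        (fun n => ∫ x, f x ∂(sizeBiased (mseq n) (∫ x, x ∂(mseq n))))
        Filter.atTop
        (nhds (∫ x, f x ∂(sizeBiased m (∫ x, x ∂m)))) := by
  intro f
  have hμs n := ae_nonneg_of_measure_neg_eq_zero (hposn n)
  have hμ := ae_nonneg_of_measure_neg_eq_zero hpos
  have hc : 0 < ∫ x, x ∂m := integral_id_pos_of_ne_dirac_zero hμ hint hne
  rw [integral_sizeBiased hμ hc]
  refine ((hmean.inv₀ hc.ne').mul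
    (tendsto_integral_mul_id hμs hμ hintn hint hweak hmean f)).congr' ?_
  filter_upwards [hmean.eventually_const_lt hc] with n hn
  exact (integral_sizeBiased (hμs n) hn f).symm
end

section
/- Let P be a probability measure on ℝ₊ with mean μ ∈ (0,∞) and Laplace transform φ with φ(t) > 0. Let S(t) be the random variable on [0,1] with density f_{S(t)}(x) = f_{S^∞}(x)1_{[0,1−φ(t)]}(x) + (|φ'(t)|/(μφ(t)))1_{(1−φ(t),1]}(x), and S^∞ the random variable with density f_{S^∞}. Then the total variation distance between law(S(t)) and law(S^∞) is at most 2|φ'(t)|/μ. -/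
/-!
The two densities agree on `[0, 1 - φ(t)]`, so their `L¹` distance is at most the sum of their
masses on `(1 - φ(t), 1]`. The transient density is constant there with mass
`φ(t) · |φ'(t)|/(μ φ(t)) = |φ'(t)|/μ`. For the stationary density, the substitution
`x = 1 - φ(s)`, `s > t`, which is legitimate because `φ' < 0` on `(0, ∞)`, turns
`∫ |φ''(φ⁻¹(1-x))/φ'(φ⁻¹(1-x))| dx` into `∫ₜ^∞ φ''(s) ds = -φ'(t)`, since `φ'' ≥ 0` and
`φ'(s) → 0` as `s → ∞`.
-/

open MeasureTheory
open scoped ENNReal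

/-- The Laplace transform `φ(s) = ∫ e^{−sx} P(dx)` of a measure `P` on `ℝ`. -/
noncomputable def lap (P : Measure ℝ) (s : ℝ) : ℝ :=
  ∫ x, Real.exp (-(s * x)) ∂P

/-- The limiting stationary search-cost density
`f_{S^∞}(x) = −(1/μ)·φ''(φ⁻¹(1−x))/φ'(φ⁻¹(1−x))` on `[0, 1−p₀]`, `p₀ = P({0})`. -/
noncomputable def fSinf (P : Measure ℝ) (μ : ℝ) (x : ℝ) : ℝ :=
  if x ≤ 1 - (P {0}).toReal then
    -(1 / μ) * (deriv (deriv (lap P)) (Function.invFun (lap P) (1 - x)) /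
      deriv (lap P) (Function.invFun (lap P) (1 - x)))
  else 0

/-- The limiting transient search-cost density: `f_{S^∞}` below the threshold
`1 − φ(t)`, and the uniform height `|φ'(t)|/(μφ(t))` above it. -/
noncomputable def fSt (P : Measure ℝ) (μ t : ℝ) (x : ℝ) : ℝ :=
  if x ≤ 1 - lap P t then fSinf P μ x else |deriv (lap P) t| / (μ * lap P t)

open Filter Set Topology Real

lemma ae_nonneg_of_measure_Iio_eq_zero {P : Measure ℝ} (hpos : P (Iio 0) = 0) :
    ∀ᵐ x ∂P, 0 ≤ x := by
  refine ae_iff.mpr ?_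
  simp only [not_le]
  exact hpos

lemma measure_Ioi_pos_of_ne_dirac {P : Measure ℝ} [IsProbabilityMeasure P]
    (hP0 : ∀ᵐ x ∂P, 0 ≤ x) (hne : P ≠ Measure.dirac 0) : 0 < P (Ioi 0) := by
  refine pos_iff_ne_zero.mpr fun hIoi => hne ?_
  have hzero : ∀ᵐ x ∂P, x ∈ ({0} : Set ℝ) := by
    filter_upwards [hP0, measure_eq_zero_iff_ae_notMem.mp hIoi] with x hx hx'
    exact le_antisymm (not_lt.mp hx') hx
  have hP1 : P {0} = 1 := by
    rw [← Measure.restrict_apply_univ, Measure.restrict_eq_self_of_ae_mem hzero, measure_univ]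
  rw [← Measure.restrict_eq_self_of_ae_mem hzero, Measure.restrict_singleton, hP1, one_smul]

section Laplace

variable {P : Measure ℝ} {s : ℝ}

lemma pow_mul_exp_neg_mul_le {x : ℝ} (hx : 0 ≤ x) (hs : 0 < s) (n : ℕ) :
    x ^ n * exp (-(s * x)) ≤ n.factorial / s ^ n := by
  have h := pow_div_factorial_le_exp (s * x) (by positivity) n
  rw [div_le_iff₀ (by positivity), mul_pow] at h
  rw [le_div_iff₀ (by positivity)]
  calc x ^ n * exp (-(s * x)) * s ^ n = s ^ n * x ^ n * exp (-(s * x)) := by ring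
    _ ≤ exp (s * x) * n.factorial * exp (-(s * x)) := by gcongr
    _ = n.factorial := by rw [mul_right_comm, ← exp_add, add_neg_cancel, exp_zero, one_mul]

lemma integrable_pow_mul_exp_neg_mul [IsFiniteMeasure P] (hP0 : ∀ᵐ x ∂P, 0 ≤ x) (n : ℕ)
    (hs : 0 < s) : Integrable (fun x => x ^ n * exp (-(s * x))) P := by
  refine (integrable_const (n.factorial / s ^ n : ℝ)).mono' (by fun_prop) ?_
  filter_upwards [hP0] with x hx
  rw [norm_of_nonneg (by positivity)]
  exact pow_mul_exp_neg_mul_le hx hs n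

lemma hasDerivAt_integral_pow_mul_exp_neg_mul [IsFiniteMeasure P] (hP0 : ∀ᵐ x ∂P, 0 ≤ x)
    (n : ℕ) (hs : 0 < s) :
    HasDerivAt (fun u => ∫ x, x ^ n * exp (-(u * x)) ∂P)
      (-∫ x, x ^ (n + 1) * exp (-(s * x)) ∂P) s := by
  have h := hasDerivAt_integral_of_dominated_loc_of_deriv_le (μ := P) (x₀ := s)
    (F := fun u x => x ^ n * exp (-(u * x))) (F' := fun u x => -(x ^ (n + 1) * exp (-(u * x))))
    (bound := fun x => x ^ (n + 1) * exp (-(s / 2 * x)))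
    (Metric.ball_mem_nhds s (half_pos hs)) (.of_forall fun u => by fun_prop)
    (integrable_pow_mul_exp_neg_mul hP0 n hs) (by fun_prop) ?_
    (integrable_pow_mul_exp_neg_mul hP0 (n + 1) (half_pos hs)) ?_
  · rw [integral_neg] at h
    exact h.2
  · filter_upwards [hP0] with x hx u hu
    rw [Metric.mem_ball, Real.dist_eq, abs_sub_lt_iff] at hu
    rw [norm_neg, norm_of_nonneg (by positivity)]
    gcongr
    nlinarith
  · refine .of_forall fun x u _ => ?_
    have hlin : HasDerivAt (fun u => -(u * x)) (-x) u := by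
      simpa using ((hasDerivAt_id u).mul_const x).fun_neg
    exact (hlin.exp.const_mul (x ^ n)).congr_deriv (by ring)

lemma hasDerivAt_lap [IsFiniteMeasure P] (hP0 : ∀ᵐ x ∂P, 0 ≤ x) (hs : 0 < s) :
    HasDerivAt (lap P) (-∫ x, x * exp (-(s * x)) ∂P) s := by
  have h := hasDerivAt_integral_pow_mul_exp_neg_mul hP0 0 hs
  simp only [pow_zero, one_mul, zero_add, pow_one] at h
  exact h

lemma deriv_lap [IsFiniteMeasure P] (hP0 : ∀ᵐ x ∂P, 0 ≤ x) (hs : 0 < s) :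
    deriv (lap P) s = -∫ x, x * exp (-(s * x)) ∂P :=
  (hasDerivAt_lap hP0 hs).deriv

lemma hasDerivAt_deriv_lap [IsFiniteMeasure P] (hP0 : ∀ᵐ x ∂P, 0 ≤ x) (hs : 0 < s) :
    HasDerivAt (deriv (lap P)) (∫ x, x ^ 2 * exp (-(s * x)) ∂P) s := by
  have h := (hasDerivAt_integral_pow_mul_exp_neg_mul hP0 1 hs).neg
  simp only [pow_one, neg_neg] at h
  refine h.congr_of_eventuallyEq ?_
  filter_upwards [Ioi_mem_nhds hs] with u hu
  exact deriv_lap hP0 hu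

lemma deriv_deriv_lap_nonneg [IsFiniteMeasure P] (hP0 : ∀ᵐ x ∂P, 0 ≤ x) (hs : 0 < s) :
    0 ≤ deriv (deriv (lap P)) s := by
  rw [(hasDerivAt_deriv_lap hP0 hs).deriv]
  exact integral_nonneg fun x => by positivity

lemma integral_pos_of_pos_on_Ioi {f : ℝ → ℝ} (hP0 : ∀ᵐ x ∂P, 0 ≤ x) (hP : 0 < P (Ioi 0))
    (hf : Integrable f P) (hf0 : ∀ x, 0 ≤ x → 0 ≤ f x) (hfpos : ∀ x, 0 < x → 0 < f x) :
    0 < ∫ x, f x ∂P := by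
  rw [integral_pos_iff_support_of_nonneg_ae (hP0.mono hf0) hf]
  exact hP.trans_le (measure_mono fun x hx => (hfpos x hx).ne')

lemma deriv_lap_neg [IsFiniteMeasure P] (hP0 : ∀ᵐ x ∂P, 0 ≤ x) (hP : 0 < P (Ioi 0))
    (hs : 0 < s) : deriv (lap P) s < 0 := by
  rw [deriv_lap hP0 hs, neg_lt_zero]
  refine integral_pos_of_pos_on_Ioi hP0 hP (by simpa using integrable_pow_mul_exp_neg_mul hP0 1 hs)
    (fun x hx => by positivity) fun x hx => by positivity

lemma strictAntiOn_lap [IsFiniteMeasure P] (hP0 : ∀ᵐ x ∂P, 0 ≤ x) (hP : 0 < P (Ioi 0)) :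
    StrictAntiOn (lap P) (Ioi 0) := by
  refine strictAntiOn_of_deriv_neg (convex_Ioi 0)
    (fun u hu => (hasDerivAt_lap hP0 hu).continuousAt.continuousWithinAt) fun u hu => ?_
  rw [interior_Ioi] at hu
  exact deriv_lap_neg hP0 hP hu

lemma lap_pos [IsProbabilityMeasure P] (hP0 : ∀ᵐ x ∂P, 0 ≤ x) (hs : 0 < s) : 0 < lap P s :=
  integral_exp_pos (by simpa using integrable_pow_mul_exp_neg_mul hP0 0 hs)

lemma lap_lt_one [IsProbabilityMeasure P] (hP0 : ∀ᵐ x ∂P, 0 ≤ x) (hP : 0 < P (Ioi 0))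
    (hs : 0 < s) : lap P s < 1 := by
  have hexp : Integrable (fun x => exp (-(s * x))) P := by
    simpa using integrable_pow_mul_exp_neg_mul hP0 0 hs
  have h := integral_pos_of_pos_on_Ioi (f := fun x => 1 - exp (-(s * x))) hP0 hP
    ((integrable_const 1).sub hexp)
    (fun x hx => sub_nonneg.mpr (exp_le_one_iff.mpr (by nlinarith)))
    (fun x hx => sub_pos.mpr (exp_lt_one_iff.mpr (by nlinarith)))
  rw [integral_sub (integrable_const 1) hexp, integral_const, probReal_univ, one_smul] at h
  exact sub_pos.mp h

lemma lap_notMem_Ioo_of_nonpos [IsProbabilityMeasure P] (hP0 : ∀ᵐ x ∂P, 0 ≤ x) {u : ℝ}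
    (hu : u ≤ 0) : lap P u ∉ Ioo 0 1 := by
  by_cases hint : Integrable (fun x => exp (-(u * x))) P
  · refine fun h => (h.2.trans_le ?_).false
    calc (1 : ℝ) = ∫ _, 1 ∂P := by simp
      _ ≤ lap P u := integral_mono_ae (integrable_const 1) hint <| by
        filter_upwards [hP0] with x hx
        simp only [one_le_exp_iff]
        nlinarith
  · simp [lap, integral_undef hint]

lemma invFun_lap_apply [IsProbabilityMeasure P] (hP0 : ∀ᵐ x ∂P, 0 ≤ x) (hP : 0 < P (Ioi 0))
    (hs : 0 < s) : Function.invFun (lap P) (lap P s) = s := by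
  have hu : lap P (Function.invFun (lap P) (lap P s)) = lap P s := Function.invFun_eq ⟨s, rfl⟩
  have hu0 : 0 < Function.invFun (lap P) (lap P s) := by
    by_contra! hu0
    refine lap_notMem_Ioo_of_nonpos hP0 hu0 ?_
    rw [hu]
    exact ⟨lap_pos hP0 hs, lap_lt_one hP0 hP hs⟩
  exact (strictAntiOn_lap hP0 hP).injOn hu0 hs hu

lemma tendsto_exp_neg_mul_atTop {x : ℝ} (hx : 0 ≤ x) :
    Tendsto (fun u => exp (-(u * x))) atTop (𝓝 (({0} : Set ℝ).indicator 1 x)) := by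
  rcases hx.eq_or_lt with rfl | hx
  · simp
  · rw [indicator_of_notMem (by simpa using hx.ne')]
    exact tendsto_exp_atBot.comp (tendsto_neg_atTop_atBot.comp (tendsto_id.atTop_mul_const hx))

lemma tendsto_lap_atTop [IsFiniteMeasure P] (hP0 : ∀ᵐ x ∂P, 0 ≤ x) :
    Tendsto (lap P) atTop (𝓝 (P {0}).toReal) := by
  have h := tendsto_integral_filter_of_dominated_convergence (μ := P) (l := atTop)
    (F := fun u x => exp (-(u * x))) (fun _ => 1) (.of_forall fun u => by fun_prop) ?_
    (integrable_const 1) (hP0.mono fun x hx => tendsto_exp_neg_mul_atTop hx)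
  · rwa [integral_indicator_one (measurableSet_singleton 0), measureReal_def] at h
  · filter_upwards [eventually_ge_atTop 0] with u hu
    filter_upwards [hP0] with x hx
    rw [norm_of_nonneg (exp_pos _).le, exp_le_one_iff]
    nlinarith

lemma tendsto_deriv_lap_atTop [IsFiniteMeasure P] (hP0 : ∀ᵐ x ∂P, 0 ≤ x) :
    Tendsto (deriv (lap P)) atTop (𝓝 0) := by
  have h := tendsto_integral_filter_of_dominated_convergence (μ := P) (l := atTop)
    (F := fun u x => x * exp (-(u * x))) (f := fun x => x * ({0} : Set ℝ).indicator 1 x)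
    (fun x => x * exp (-(1 * x))) (.of_forall fun u => by fun_prop) ?_
    (by simpa using integrable_pow_mul_exp_neg_mul hP0 1 one_pos)
    (hP0.mono fun x hx => (tendsto_exp_neg_mul_atTop hx).const_mul x)
  · have h0 : (fun x => x * ({0} : Set ℝ).indicator 1 x) = 0 := by
      ext x
      by_cases hx : x = 0 <;> simp [hx]
    rw [h0, integral_zero'] at h
    refine Tendsto.congr' ?_ (by simpa using h.neg)
    filter_upwards [eventually_gt_atTop 0] with u hu
    exact (deriv_lap hP0 hu).symm
  · filter_upwards [eventually_ge_atTop 1] with u hu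
    filter_upwards [hP0] with x hx
    rw [norm_of_nonneg (by positivity)]
    gcongr

end Laplace

section ChangeOfVariables

variable {φ φ' φ'' g : ℝ → ℝ} {t p : ℝ}

lemma strictAntiOn_Ici_of_hasDerivAt_neg (hφ : ∀ s ≥ t, HasDerivAt φ (φ' s) s)
    (hφ'_neg : ∀ s > t, φ' s < 0) : StrictAntiOn φ (Ici t) := by
  refine strictAntiOn_of_hasDerivWithinAt_neg (f' := φ') (convex_Ici t)
    (fun s hs => (hφ s hs).continuousAt.continuousWithinAt) (fun s hs => ?_) fun s hs => ?_
  · rw [interior_Ici] at hs ⊢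
    exact (hφ s hs.le).hasDerivWithinAt
  · rw [interior_Ici] at hs
    exact hφ'_neg s hs

lemma image_one_sub_Ioi (hφ : ∀ s ≥ t, HasDerivAt φ (φ' s) s) (hφ'_neg : ∀ s > t, φ' s < 0)
    (hφ_lim : Tendsto φ atTop (𝓝 p)) :
    (fun s => 1 - φ s) '' Ioi t = Ioo (1 - φ t) (1 - p) := by
  have hanti := strictAntiOn_Ici_of_hasDerivAt_neg hφ hφ'_neg
  have hp : ∀ s ≥ t, p < φ s := fun s hs =>
    (le_of_tendsto hφ_lim ((eventually_ge_atTop (s + 1)).mono fun u hu =>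
      hanti.antitoneOn (show t ≤ s + 1 by linarith) (show t ≤ u by linarith) hu)).trans_lt
      (hanti hs (show t ≤ s + 1 by linarith) (by linarith))
  apply Subset.antisymm
  · rintro _ ⟨s, hs, rfl⟩
    exact ⟨by linarith [hanti self_mem_Ici (mem_Ici.mpr (le_of_lt hs)) hs],
      by linarith [hp s (le_of_lt hs)]⟩
  · rintro y ⟨hy₁, hy₂⟩
    obtain ⟨S, hS, htS⟩ :=
      ((hφ_lim.eventually_lt_const (by linarith : p < 1 - y)).and (eventually_gt_atTop t)).exists
    have hcont : ContinuousOn (fun s => 1 - φ s) (Icc t S) := fun s hs =>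
      (continuousAt_const.sub (hφ s hs.1).continuousAt).continuousWithinAt
    obtain ⟨s, hs, rfl⟩ := intermediate_value_Ioo htS.le hcont ⟨hy₁, by linarith⟩
    exact ⟨s, hs.1, rfl⟩

/-- The integrand produced by the substitution `x = 1 - φ s`. -/
lemma abs_deriv_mul_comp_one_sub (hφ'_neg : ∀ s > t, φ' s < 0) (hg : ∀ s > t, g (φ s) = s)
    {s : ℝ} (hs : s ∈ Ioi t) :
    |-φ' s| • (φ'' (g (1 - (1 - φ s))) / φ' (g (1 - (1 - φ s)))) = -φ'' s := by
  rw [sub_sub_cancel, hg s hs, abs_neg, abs_of_neg (hφ'_neg s hs), smul_eq_mul]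
  field_simp [(hφ'_neg s hs).ne]

lemma injOn_one_sub_Ioi (hφ : ∀ s ≥ t, HasDerivAt φ (φ' s) s) (hφ'_neg : ∀ s > t, φ' s < 0) :
    InjOn (fun s => 1 - φ s) (Ioi t) := fun _ ha _ hb h =>
  (strictAntiOn_Ici_of_hasDerivAt_neg hφ hφ'_neg).injOn (Ioi_subset_Ici_self ha)
    (Ioi_subset_Ici_self hb) (sub_right_injective h)

lemma integrableOn_deriv2_div_deriv_comp (hφ : ∀ s ≥ t, HasDerivAt φ (φ' s) s)
    (hφ' : ∀ s ≥ t, HasDerivAt φ' (φ'' s) s) (hφ'_neg : ∀ s > t, φ' s < 0)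
    (hφ''_nonneg : ∀ s > t, 0 ≤ φ'' s) (hφ_lim : Tendsto φ atTop (𝓝 p))
    (hφ'_lim : Tendsto φ' atTop (𝓝 0)) (hg : ∀ s > t, g (φ s) = s) :
    IntegrableOn (fun x => φ'' (g (1 - x)) / φ' (g (1 - x))) (Ioo (1 - φ t) (1 - p)) := by
  rw [← image_one_sub_Ioi hφ hφ'_neg hφ_lim, integrableOn_image_iff_integrableOn_abs_deriv_smul
    measurableSet_Ioi (fun s hs => ((hφ s hs.le).const_sub 1).hasDerivWithinAt)
    (injOn_one_sub_Ioi hφ hφ'_neg)]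
  refine IntegrableOn.congr_fun ?_ (fun s hs => (abs_deriv_mul_comp_one_sub hφ'_neg hg hs).symm)
    measurableSet_Ioi
  exact (integrableOn_Ioi_deriv_of_nonneg (hφ' t le_rfl).continuousAt.continuousWithinAt
    (fun s hs => hφ' s (le_of_lt hs)) hφ''_nonneg hφ'_lim).neg

lemma integral_abs_deriv2_div_deriv_comp (hφ : ∀ s ≥ t, HasDerivAt φ (φ' s) s)
    (hφ' : ∀ s ≥ t, HasDerivAt φ' (φ'' s) s) (hφ'_neg : ∀ s > t, φ' s < 0)
    (hφ''_nonneg : ∀ s > t, 0 ≤ φ'' s) (hφ_lim : Tendsto φ atTop (𝓝 p))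
    (hφ'_lim : Tendsto φ' atTop (𝓝 0)) (hg : ∀ s > t, g (φ s) = s) :
    ∫ x in Ioo (1 - φ t) (1 - p), |φ'' (g (1 - x)) / φ' (g (1 - x))| = -φ' t := by
  rw [← image_one_sub_Ioi hφ hφ'_neg hφ_lim, integral_image_eq_integral_abs_deriv_smul
    measurableSet_Ioi (fun s hs => ((hφ s hs.le).const_sub 1).hasDerivWithinAt)
    (injOn_one_sub_Ioi hφ hφ'_neg)]
  have h : EqOn (fun s => |-φ' s| • |φ'' (g (1 - (1 - φ s))) / φ' (g (1 - (1 - φ s)))|) φ''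
      (Ioi t) := fun s hs => by
    dsimp only
    rw [smul_eq_mul, ← abs_abs (-φ' s), ← abs_mul, ← smul_eq_mul,
      abs_deriv_mul_comp_one_sub hφ'_neg hg hs, abs_neg, abs_of_nonneg (hφ''_nonneg s hs)]
  rw [setIntegral_congr_fun measurableSet_Ioi h, integral_Ioi_of_hasDerivAt_of_nonneg
    (hφ' t le_rfl).continuousAt.continuousWithinAt (fun s hs => hφ' s (le_of_lt hs))
    hφ''_nonneg hφ'_lim, zero_sub]

end ChangeOfVariables

lemma intervalIntegral_abs_sub_le_of_eqOn {f g h : ℝ → ℝ} {l a r : ℝ} (hla : l ≤ a) (har : a ≤ r)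
    (heq : EqOn f g (Ioc l a)) (hh : IntegrableOn h (Ioc a r))
    (hle : ∀ x ∈ Ioc a r, |f x - g x| ≤ h x) :
    ∫ x in l..r, |f x - g x| ≤ ∫ x in Ioc a r, h x := by
  have hsupp : EqOn (fun x => |f x - g x|) ((Ioc a r).indicator fun x => |f x - g x|) (Ioc l r) :=
    fun x hx => by
      by_cases hxa : x ≤ a
      · rw [indicator_of_notMem fun h => h.1.not_ge hxa]
        simp [heq ⟨hx.1, hxa⟩]
      · rw [indicator_of_mem (show x ∈ Ioc a r from ⟨not_le.mp hxa, hx.2⟩)]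
  rw [intervalIntegral.integral_of_le (hla.trans har),
    setIntegral_congr_fun measurableSet_Ioc hsupp, setIntegral_indicator measurableSet_Ioc,
    inter_eq_self_of_subset_right (Ioc_subset_Ioc_left hla)]
  exact integral_mono_of_nonneg (.of_forall fun x => abs_nonneg _) hh
    (ae_restrict_of_forall_mem measurableSet_Ioc hle)

section StationaryDensity

variable {P : Measure ℝ} {t : ℝ}

lemma fSinf_eq_indicator (μ : ℝ) :
    fSinf P μ = (Iic (1 - (P {0}).toReal)).indicator fun x =>
      -(1 / μ) * (deriv (deriv (lap P)) (Function.invFun (lap P) (1 - x)) /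
        deriv (lap P) (Function.invFun (lap P) (1 - x))) := by
  ext x
  simp only [fSinf, indicator_apply, mem_Iic]

lemma integrableOn_fSinf [IsProbabilityMeasure P] (hP0 : ∀ᵐ x ∂P, 0 ≤ x) (hP : 0 < P (Ioi 0))
    (μ : ℝ) (ht : 0 < t) :
    IntegrableOn (fSinf P μ) (Ioc (1 - lap P t) 1) := by
  have h := integrableOn_deriv2_div_deriv_comp
    (fun s hs => (hasDerivAt_lap hP0 (ht.trans_le hs)).differentiableAt.hasDerivAt)
    (fun s hs => (hasDerivAt_deriv_lap hP0 (ht.trans_le hs)).differentiableAt.hasDerivAt)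
    (fun s hs => deriv_lap_neg hP0 hP (ht.trans hs))
    (fun s hs => deriv_deriv_lap_nonneg hP0 (ht.trans hs))
    (tendsto_lap_atTop hP0) (tendsto_deriv_lap_atTop hP0)
    (fun s hs => invFun_lap_apply hP0 hP (ht.trans hs))
  rw [← integrableOn_Ioc_iff_integrableOn_Ioo] at h
  rw [fSinf_eq_indicator, integrableOn_indicator_iff measurableSet_Iic]
  exact IntegrableOn.mono_set (Integrable.const_mul h _) fun x hx => ⟨hx.2.1, hx.1⟩

lemma integral_abs_fSinf [IsProbabilityMeasure P] (hP0 : ∀ᵐ x ∂P, 0 ≤ x) (hP : 0 < P (Ioi 0))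
    {μ : ℝ} (hμ : 0 < μ) (ht : 0 < t) :
    ∫ x in Ioc (1 - lap P t) 1, |fSinf P μ x| = |deriv (lap P) t| / μ := by
  have h := integral_abs_deriv2_div_deriv_comp
    (fun s hs => (hasDerivAt_lap hP0 (ht.trans_le hs)).differentiableAt.hasDerivAt)
    (fun s hs => (hasDerivAt_deriv_lap hP0 (ht.trans_le hs)).differentiableAt.hasDerivAt)
    (fun s hs => deriv_lap_neg hP0 hP (ht.trans hs))
    (fun s hs => deriv_deriv_lap_nonneg hP0 (ht.trans hs))
    (tendsto_lap_atTop hP0) (tendsto_deriv_lap_atTop hP0)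
    (fun s hs => invFun_lap_apply hP0 hP (ht.trans hs))
  have habs : (fun x => |fSinf P μ x|) = (Iic (1 - (P {0}).toReal)).indicator fun x =>
      μ⁻¹ * |deriv (deriv (lap P)) (Function.invFun (lap P) (1 - x)) /
        deriv (lap P) (Function.invFun (lap P) (1 - x))| := by
    ext x
    rw [fSinf_eq_indicator]
    by_cases hx : x ∈ Iic (1 - (P {0}).toReal)
    · simp [indicator_of_mem hx, abs_mul, abs_of_pos hμ]
    · simp [indicator_of_notMem hx]
  rw [habs, setIntegral_indicator measurableSet_Iic, Ioc_inter_Iic,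
    min_eq_right (by simp : 1 - (P {0}).toReal ≤ 1), integral_Ioc_eq_integral_Ioo,
    integral_const_mul, h, abs_of_neg (deriv_lap_neg hP0 hP ht)]
  ring

end StationaryDensity

theorem stmt_18_general (P : Measure ℝ) (hprob : IsProbabilityMeasure P)
    (hpos : P {x | x < 0} = 0) (hne : P ≠ Measure.dirac 0)
    (μ : ℝ) (hμpos : 0 < μ)
    (t : ℝ) (ht : 0 < t) :
    ∫ x in (0:ℝ)..1, |fSt P μ t x - fSinf P μ x| ≤ 2 * |deriv (lap P) t| / μ := by
  have hP0 := ae_nonneg_of_measure_Iio_eq_zero hpos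
  have hP := measure_Ioi_pos_of_ne_dirac hP0 hne
  have hφt := lap_pos hP0 ht
  have hφt_lt := lap_lt_one hP0 hP ht
  have hc : IntegrableOn (fun _ => |deriv (lap P) t| / (μ * lap P t)) (Ioc (1 - lap P t) 1) :=
    integrableOn_const measure_Ioc_lt_top.ne
  have hf := (integrableOn_fSinf hP0 hP μ ht).abs
  calc ∫ x in (0:ℝ)..1, |fSt P μ t x - fSinf P μ x|
      ≤ ∫ x in Ioc (1 - lap P t) 1, (|deriv (lap P) t| / (μ * lap P t) + |fSinf P μ x|) := by
        refine intervalIntegral_abs_sub_le_of_eqOn (by linarith) (by linarith)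
          (fun x hx => if_pos hx.2) (hc.add hf) fun x hx => ?_
        rw [fSt, if_neg (not_le.mpr hx.1)]
        exact (abs_sub _ _).trans_eq (by rw [abs_of_nonneg (by positivity)])
    _ = lap P t * (|deriv (lap P) t| / (μ * lap P t)) + |deriv (lap P) t| / μ := by
        rw [integral_add hc hf, setIntegral_const,
          Real.volume_real_Ioc_of_le (by linarith), integral_abs_fSinf hP0 hP hμpos ht,
          smul_eq_mul, sub_sub_cancel]
    _ = 2 * |deriv (lap P) t| / μ := by
        field_simp
        ring

/-- The total variation distance between `law(S(t))` (with density `f_{S(t)}`) and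
`law(S^∞)` (with density `f_{S^∞}`) is at most `2|φ'(t)|/μ`: here it is expressed as
`∫₀¹ |f_{S(t)} − f_{S^∞}| ≤ 2|φ'(t)|/μ`. -/
theorem stmt_18 (P : Measure ℝ) (hprob : IsProbabilityMeasure P)
    (hpos : P {x | x < 0} = 0) (hne : P ≠ Measure.dirac 0)
    (hint : Integrable (fun x => x) P)
    (hmom : ∀ s : ℝ, 0 < s → Integrable (fun x => x ^ 2 * Real.exp (-(s * x))) P)
    (μ : ℝ) (hμ : μ = ∫ x, x ∂P) (hμpos : 0 < μ)
    (t : ℝ) (ht : 0 < t) (hφt : 0 < lap P t) :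
    ∫ x in (0:ℝ)..1, |fSt P μ t x - fSinf P μ x| ≤ 2 * |deriv (lap P) t| / μ :=
  stmt_18_general P hprob hpos hne μ hμpos t ht
end
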